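/- Let N ≥ 1 and 1 ≤ k ≤ N, let L : Fin N → ℝ and M ∈ ℝ. Then EES_{1−k/N}(L) ≤ M if and only if there exist t ∈ ℝ and λ : Fin N → ℝ with λ_i ≥ L_i − t and λ_i ≥ 0 for every i, such that (1/k)(k·t + Σ_i λ_i) ≤ M. -/

import Mathlib

open Finset

/-- The values of `L : Fin N → ℝ` rearranged in nonincreasing order. -/
noncomputable def sortedDesc {N : ℕ} (L : Fin N → ℝ) : Fin N → ℝ :=
  fun j => L (Tuple.sort L j.rev)

/-- The `k`-th largest value (with `k` 1-indexed) of `L : Fin N → ℝ`. -/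
noncomputable def kthLargest {N : ℕ} (L : Fin N → ℝ) (k : ℕ) (h : k - 1 < N) : ℝ :=
  sortedDesc L ⟨k - 1, h⟩

/-- The sum of the `k` largest values of `L : Fin N → ℝ`. -/
noncomputable def sumKLargest {N : ℕ} (L : Fin N → ℝ) (k : ℕ) : ℝ :=
  ∑ j ∈ Finset.univ.filter (fun j : Fin N => (j : ℕ) < k), sortedDesc L j

/-!
For every threshold `t`, each of the `k` largest values is at most `t` plus its excess over `t`,
so `S_k(L) ≤ k t + ∑ᵢ λᵢ` whenever `λᵢ ≥ max (Lᵢ - t) 0`. Taking `t = L_(k)` and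
`λᵢ = max (Lᵢ - t) 0` gives equality, because the excess over `L_(k)` vanishes exactly
outside the `k` largest values.
-/

section SortedDesc

variable {N : ℕ} (L : Fin N → ℝ)

theorem sortedDesc_antitone : Antitone (sortedDesc L) :=
  fun _ _ h => Tuple.monotone_sort L (Fin.rev_le_rev.mpr h)

theorem sumKLargest_le_mul_add_sum {k : ℕ} (hkN : k ≤ N) {t : ℝ} {lam : Fin N → ℝ}
    (hlam : ∀ i, L i - t ≤ lam i) (hlam0 : ∀ i, 0 ≤ lam i) :
    sumKLargest L k ≤ k * t + ∑ i, lam i := by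
  set σ := Fin.revPerm.trans (Tuple.sort L)
  set A : Finset (Fin N) := univ.filter fun j : Fin N => (j : ℕ) < k
  have hA : #A = k := by simp [A, Fin.card_filter_val_lt, hkN]
  calc sumKLargest L k ≤ ∑ j ∈ A, (t + lam (σ j)) :=
        sum_le_sum fun j _ => by linarith [hlam (σ j), show sortedDesc L j = L (σ j) from rfl]
    _ = k * t + ∑ j ∈ A, lam (σ j) := by
        rw [sum_add_distrib, sum_const, hA, nsmul_eq_mul]
    _ ≤ k * t + ∑ j, lam (σ j) := by
        gcongr
        · exact fun j _ _ => hlam0 (σ j)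
        · exact subset_univ A
    _ = k * t + ∑ i, lam i := by rw [Equiv.sum_comp σ lam]

theorem sumKLargest_eq_mul_kthLargest_add_sum {k : ℕ} (h : k - 1 < N) :
    sumKLargest L k = k * kthLargest L k h + ∑ i, max (L i - kthLargest L k h) 0 := by
  set t := kthLargest L k h
  set A : Finset (Fin N) := univ.filter fun j : Fin N => (j : ℕ) < k
  have hA : #A = k := by simp [A, Fin.card_filter_val_lt]; omega
  have excess_of_lt : ∀ j ∈ A, max (sortedDesc L j - t) 0 = sortedDesc L j - t := by
    intro j hj
    have : j ≤ ⟨k - 1, h⟩ := by simp [A] at hj; show (j : ℕ) ≤ k - 1; omega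
    simp [sortedDesc_antitone L this, t, kthLargest]
  have excess_of_ge : ∀ j ∈ univ.filter fun j : Fin N => ¬ (j : ℕ) < k,
      max (sortedDesc L j - t) 0 = 0 := by
    intro j hj
    have : ⟨k - 1, h⟩ ≤ j := by simp at hj; show k - 1 ≤ (j : ℕ); omega
    simp [sortedDesc_antitone L this, t, kthLargest]
  have hexcess : ∑ i, max (L i - t) 0 = sumKLargest L k - k * t := by
    rw [← Equiv.sum_comp (Fin.revPerm.trans (Tuple.sort L)) fun i => max (L i - t) 0]
    change ∑ j, max (sortedDesc L j - t) 0 = _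
    rw [← sum_filter_add_sum_filter_not univ fun j : Fin N => (j : ℕ) < k,
      sum_congr rfl excess_of_lt, sum_congr rfl excess_of_ge, sum_const_zero, add_zero,
      sum_sub_distrib, sum_const, hA, nsmul_eq_mul, sumKLargest]
  linarith

end SortedDesc

theorem EES_le_iff_exists_feasible_general (N k : ℕ) (hk1 : 1 ≤ k) (hkN : k ≤ N)
    (L : Fin N → ℝ) (M : ℝ) :
    sumKLargest L k / k ≤ M ↔
      ∃ (t : ℝ) (lam : Fin N → ℝ),
        (∀ i, lam i ≥ L i - t) ∧ (∀ i, lam i ≥ 0) ∧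
          (1 / (k : ℝ)) * ((k : ℝ) * t + ∑ i, lam i) ≤ M := by
  have hk : (0 : ℝ) < k := by exact_mod_cast hk1
  have h : k - 1 < N := by omega
  simp_rw [div_le_iff₀ hk, one_div, inv_mul_le_iff₀ hk]
  constructor
  · intro hM
    refine ⟨kthLargest L k h, fun i => max (L i - kthLargest L k h) 0,
      fun i => le_max_left _ _, fun i => le_max_right _ _, ?_⟩
    rw [← sumKLargest_eq_mul_kthLargest_add_sum L h]
    linarith
  · rintro ⟨t, lam, hlam, hlam0, hle⟩
    linarith [sumKLargest_le_mul_add_sum L hkN hlam hlam0]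

/-- `EES_{1-k/N}(L) = S_k(L)/k ≤ M` iff there exist `t : ℝ` and
`lam : Fin N → ℝ` with `lam i ≥ L i - t` and `lam i ≥ 0` for every `i` such that
`(1/k) * (k * t + ∑ i, lam i) ≤ M`. -/
theorem EES_le_iff_exists_feasible (N k : ℕ) (hN : 1 ≤ N) (hk1 : 1 ≤ k) (hkN : k ≤ N)
    (L : Fin N → ℝ) (M : ℝ) :
    sumKLargest L k / k ≤ M ↔
      ∃ (t : ℝ) (lam : Fin N → ℝ),
        (∀ i, lam i ≥ L i - t) ∧ (∀ i, lam i ≥ 0) ∧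
          (1 / (k : ℝ)) * ((k : ℝ) * t + ∑ i, lam i) ≤ M :=
  EES_le_iff_exists_feasible_general N k hk1 hkN L M
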